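/- There exists a Wang tile set τ that admits a tiling of the plane and is aperiodic: for every tiling f of the plane by τ and every nonzero vector v ∈ ℤ², there exists x ∈ ℤ² with f (x + v) ≠ f x. -/

import Mathlib

/-- A Wang tile set: a finite (enumerable) set of tiles, a finite set of colors,
and the four side colors of each tile. -/
structure WangTileSet where
  Tile : Type
  Color : Type
  fintypeTile : Fintype Tile
  decEqTile : DecidableEq Tile
  encodableTile : Encodable Tile
  fintypeColor : Fintype Color
  north : Tile → Color
  south : Tile → Color
  east : Tile → Color
  west : Tile → Color

attribute [instance] WangTileSet.fintypeTile WangTileSet.decEqTile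
  WangTileSet.encodableTile WangTileSet.fintypeColor

/-- `f` is a tiling of the plane by the Wang tile set `W`. -/
def WangTileSet.IsTiling (W : WangTileSet) (f : ℤ × ℤ → W.Tile) : Prop :=
  ∀ i j : ℤ,
    W.east (f (i, j)) = W.west (f (i + 1, j)) ∧
    W.north (f (i, j)) = W.south (f (i, j + 1))

/-- The `n × n` block of `f` at position `(i, j)`. -/
def WangTileSet.block (W : WangTileSet) (f : ℤ × ℤ → W.Tile) (n : ℕ) (i j : ℤ) :
    Fin n × Fin n → W.Tile :=
  fun p => f (i + (p.1 : ℤ), j + (p.2 : ℤ))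

/-- Plain Kolmogorov complexity of a natural number: the least size of a code
evaluating to it on input `0`. -/
noncomputable def K (m : ℕ) : ℕ :=
  sInf {k | ∃ c : Nat.Partrec.Code, c.eval 0 = Part.some m ∧ Nat.size (Encodable.encode c) = k}

/-!
The tile set is a variant of the Kari–Culik construction. A tile carries a tag choosing a
multiplier `m ∈ {2, 6}`, digits `s, n ∈ {0, 1, 2}` on its south and north edges and carries
`w, e` on its west and east edges, subject to `3 n = m s + w - e` and `s + n ≥ 1`.

Tilings exist: let `x_j` be the bi-infinite orbit of `1` under the bijection of `(2/3, 2]`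
sending `y ↦ 2y` for `y ≤ 1` and `y ↦ 2y/3` for `y > 1`. Row `j` spells the Beatty digits
`⌊(i+1) x_j⌋ - ⌊i x_j⌋` of `x_j`, and `3 x_{j+1} = m_j x_j` produces carries in `[-5, 2]`.

No tiling is periodic. Summing the tile relation over `N` consecutive tiles of row `j` gives
`3 S_{j+1} = m_j S_j + (difference of two carries)`, while `s + n ≥ 1` forces
`S_j + S_{j+1} ≥ N`. A horizontal period `N` cancels the carries, so `3 S_{j+1} = m_j S_j` with
`m_j` even and `2^j ∣ S_j`, impossible for the nonzero `S_j ≤ 2N`. A period `(a, b)` with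
`b > 0` gives `3^b S_{j+b} ≈ (m_j ⋯ m_{j+b-1}) S_j` up to a bounded error, while `S_{j+b}` is
`S_j` with its window shifted by `a`; since the even product differs from `3^b`, every `S_j`
stays bounded in `N`, contradicting the linear growth.
-/

open Finset Function

section Floor

variable {R : Type*} [CommRing R] [LinearOrder R] [IsStrictOrderedRing R] [FloorRing R]

theorem floor_le_floor_add_sub_floor (u α : R) : ⌊α⌋ ≤ ⌊u + α⌋ - ⌊u⌋ := by
  linarith [Int.le_floor_add u α]

theorem floor_add_sub_floor_lt (u α : R) : ((⌊u + α⌋ - ⌊u⌋ : ℤ) : R) < α + 1 := by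
  push_cast
  linarith [Int.floor_le (u + α), Int.lt_floor_add_one u]

theorem mul_floor_sub_mul_floor_mem_Ioo {m n : ℤ} (hm : 0 < m) (hn : 0 < n) {u v : R}
    (h : m * u = n * v) : m * ⌊u⌋ - n * ⌊v⌋ ∈ Set.Ioo (-m) n := by
  have hm' : (0 : R) < m := by exact_mod_cast hm
  have hn' : (0 : R) < n := by exact_mod_cast hn
  have hu := Int.floor_le u
  have hu' := Int.lt_floor_add_one u
  have hv := Int.floor_le v
  have hv' := Int.lt_floor_add_one v
  constructor
  · have : ((-m : ℤ) : R) < (m * ⌊u⌋ - n * ⌊v⌋ : ℤ) := by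
      push_cast
      nlinarith [mul_lt_mul_of_pos_left hu' hm', mul_le_mul_of_nonneg_left hv hn'.le]
    exact_mod_cast this
  · have : ((m * ⌊u⌋ - n * ⌊v⌋ : ℤ) : R) < n := by
      push_cast
      nlinarith [mul_le_mul_of_nonneg_left hu hm'.le, mul_lt_mul_of_pos_left hv' hn']
    exact_mod_cast this

end Floor

section Recurrences

theorem pow_dvd_of_mul_succ_eq {p q : ℤ} (hpq : IsCoprime q p) {u m : ℕ → ℤ}
    (hm : ∀ k, q ∣ m k) (h : ∀ k, p * u (k + 1) = m k * u k) (k : ℕ) : q ^ k ∣ u k := by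
  induction k with
  | zero => simp
  | succ k ih =>
    refine (hpq.pow_left).dvd_of_dvd_mul_left ?_
    rw [h, pow_succ, mul_comm]
    exact mul_dvd_mul (hm k) ih

theorem abs_pow_mul_sub_prod_mul_le {p M D : ℤ} {u m d : ℕ → ℤ} (hm : ∀ k, |m k| ≤ M)
    (hd : ∀ k, |d k| ≤ D) (h : ∀ k, p * u (k + 1) = m k * u k + d k) (k : ℕ) :
    |p ^ k * u k - (∏ t ∈ range k, m t) * u 0| ≤ D * (M + |p| + 1) ^ k := by
  have hM : 0 ≤ M := (abs_nonneg _).trans (hm 0)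
  have hD : 0 ≤ D := (abs_nonneg _).trans (hd 0)
  induction k with
  | zero => simpa using hD
  | succ k ih =>
    have hstep : p ^ (k + 1) * u (k + 1) - (∏ t ∈ range (k + 1), m t) * u 0
        = m k * (p ^ k * u k - (∏ t ∈ range k, m t) * u 0) + p ^ k * d k := by
      rw [prod_range_succ, pow_succ]
      linear_combination p ^ k * h k
    have hp : |p| ^ k ≤ (M + |p| + 1) ^ k := pow_le_pow_left₀ (abs_nonneg p) (by linarith) k
    have hK : 0 ≤ (M + |p| + 1) ^ k := by positivity
    calc _ ≤ |m k| * |p ^ k * u k - (∏ t ∈ range k, m t) * u 0| + |p| ^ k * |d k| := by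
          rw [hstep, ← abs_mul, ← abs_pow, ← abs_mul]; exact abs_add_le _ _
      _ ≤ M * (D * (M + |p| + 1) ^ k) + (M + |p| + 1) ^ k * D := by
          gcongr
          exacts [hm k, hd k]
      _ ≤ D * (M + |p| + 1) ^ (k + 1) := by
          rw [pow_succ]; nlinarith [mul_nonneg (mul_nonneg hD hK) (abs_nonneg p)]

theorem prod_range_ne_three_pow {m : ℕ → ℤ} (hm : ∀ k, 2 ∣ m k) {b : ℕ} (hb : 0 < b) :
    ∏ t ∈ range b, m t ≠ 3 ^ b := by
  intro h
  have heven : (2 : ℤ) ∣ 3 ^ b := h ▸ (hm 0).trans (dvd_prod_of_mem _ (mem_range.2 hb))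
  exact (Int.not_even_iff_odd.2 (Odd.pow (by decide))) (even_iff_two_dvd.2 heven)

theorem abs_sum_range_sub_sum_range_le {g : ℤ → ℤ} {B : ℤ} (hg : ∀ i, 0 ≤ g i ∧ g i ≤ B)
    (c d : ℤ) (N : ℕ) :
    |∑ k ∈ range N, g (c + k) - ∑ k ∈ range N, g (d + k)| ≤ B * |c - d| := by
  have hstep (e : ℤ) :
      ∑ k ∈ range N, g (e + 1 + k) = ∑ k ∈ range N, g (e + k) + g (e + N) - g e := by
    have h1 := sum_range_succ (fun k : ℕ => g (e + k)) N
    have h2 := sum_range_succ' (fun k : ℕ => g (e + k)) N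
    push_cast at h1 h2
    simp only [add_zero, ← add_assoc, add_right_comm _ _ (1 : ℤ)] at h2
    linarith
  have hnat (e : ℤ) (t : ℕ) :
      |∑ k ∈ range N, g (e + t + k) - ∑ k ∈ range N, g (e + k)| ≤ B * t := by
    induction t with
    | zero => simp
    | succ t ih =>
      obtain ⟨hlo, hhi⟩ := hg (e + t + N)
      obtain ⟨hlo', hhi'⟩ := hg (e + t)
      rw [show e + ((t + 1 : ℕ) : ℤ) = e + t + 1 by push_cast; ring, hstep, abs_le]
      rw [abs_le] at ih
      push_cast
      constructor <;> linarith [ih.1, ih.2]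
  rcases le_total d c with h | h
  · obtain ⟨t, rfl⟩ : ∃ t : ℕ, c = d + t := ⟨(c - d).toNat, by omega⟩
    simpa using hnat d t
  · obtain ⟨t, rfl⟩ : ∃ t : ℕ, d = c + t := ⟨(d - c).toNat, by omega⟩
    simpa [abs_sub_comm] using hnat c t

end Recurrences

namespace Kari

def mult (b : Bool) : ℤ := cond b 6 2

theorem two_dvd_mult (b : Bool) : 2 ∣ mult b := by cases b <;> decide

theorem abs_mult_le (b : Bool) : |mult b| ≤ 6 := by cases b <;> decide

theorem mult_pos (b : Bool) : 0 < mult b := by cases b <;> decide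

def tag (y : ℚ) : Bool := decide (y ≤ 1)

def step (y : ℚ) : ℚ := mult (tag y) * y / 3

def stepInv (y : ℚ) : ℚ := if 4 / 3 < y then y / 2 else 3 * y / 2

theorem step_of_le_one {y : ℚ} (h : y ≤ 1) : step y = 2 * y := by
  rw [step, tag, decide_eq_true h]; simp only [mult, cond_true]; ring

theorem step_of_one_lt {y : ℚ} (h : 1 < y) : step y = 2 / 3 * y := by
  rw [step, tag, decide_eq_false (not_le.2 h)]; simp only [mult, cond_false]; ring

theorem step_mem {y : ℚ} (hy : y ∈ Set.Ioc (2 / 3) 2) : step y ∈ Set.Ioc (2 / 3) 2 := by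
  obtain ⟨h1, h2⟩ := hy
  rcases le_or_gt y 1 with h | h
  · rw [step_of_le_one h]; constructor <;> linarith
  · rw [step_of_one_lt h]; constructor <;> linarith

theorem stepInv_mem {y : ℚ} (hy : y ∈ Set.Ioc (2 / 3) 2) : stepInv y ∈ Set.Ioc (2 / 3) 2 := by
  obtain ⟨h1, h2⟩ := hy
  unfold stepInv; split_ifs <;> constructor <;> linarith

theorem stepInv_step {y : ℚ} (hy : y ∈ Set.Ioc (2 / 3) 2) : stepInv (step y) = y := by
  obtain ⟨h1, h2⟩ := hy
  rcases le_or_gt y 1 with h | h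
  · rw [step_of_le_one h, stepInv, if_pos (by linarith)]; ring
  · rw [step_of_one_lt h, stepInv, if_neg (by linarith)]; ring

theorem step_stepInv {y : ℚ} (hy : y ∈ Set.Ioc (2 / 3) 2) : step (stepInv y) = y := by
  obtain ⟨h1, h2⟩ := hy
  by_cases h : 4 / 3 < y
  · rw [stepInv, if_pos h, step_of_le_one (by linarith)]; ring
  · rw [stepInv, if_neg h, step_of_one_lt (by linarith)]; ring

def stepPerm : Equiv.Perm (Set.Ioc (2 / 3 : ℚ) 2) where
  toFun y := ⟨step y, step_mem y.2⟩
  invFun y := ⟨stepInv y, stepInv_mem y.2⟩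
  left_inv y := Subtype.ext (stepInv_step y.2)
  right_inv y := Subtype.ext (step_stepInv y.2)

def orbit (j : ℤ) : ℚ := ((stepPerm ^ j) ⟨1, by norm_num⟩ : ℚ)

theorem orbit_mem (j : ℤ) : orbit j ∈ Set.Ioc (2 / 3) 2 := Subtype.prop _

theorem orbit_add_one (j : ℤ) : orbit (j + 1) = step (orbit j) := by
  rw [orbit, add_comm, zpow_add, zpow_one, Equiv.Perm.mul_apply]
  rfl

theorem mult_mul_orbit (j : ℤ) : mult (tag (orbit j)) * orbit j = 3 * orbit (j + 1) := by
  rw [orbit_add_one, step]; ring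

def digit (i j : ℤ) : ℤ := ⌊((i : ℚ) + 1) * orbit j⌋ - ⌊(i : ℚ) * orbit j⌋

def carry (i j : ℤ) : ℤ :=
  mult (tag (orbit j)) * ⌊(i : ℚ) * orbit j⌋ - 3 * ⌊(i : ℚ) * orbit (j + 1)⌋

theorem digit_eq (i j : ℤ) :
    digit i j = ⌊(i : ℚ) * orbit j + orbit j⌋ - ⌊(i : ℚ) * orbit j⌋ := by
  rw [digit, add_one_mul]

theorem floor_orbit_le_digit (i j : ℤ) : ⌊orbit j⌋ ≤ digit i j :=
  digit_eq i j ▸ floor_le_floor_add_sub_floor _ _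

theorem digit_nonneg (i j : ℤ) : 0 ≤ digit i j :=
  (Int.floor_nonneg.2 (by linarith [(orbit_mem j).1])).trans (floor_orbit_le_digit i j)

theorem digit_le_two (i j : ℤ) : digit i j ≤ 2 := by
  have h := digit_eq i j ▸ floor_add_sub_floor_lt ((i : ℚ) * orbit j) (orbit j)
  have : (digit i j : ℚ) < 3 := by linarith [(orbit_mem j).2]
  exact Int.lt_add_one_iff.1 (by exact_mod_cast this)

theorem one_le_digit_add_digit (i j : ℤ) : 1 ≤ digit i j + digit i (j + 1) := by
  have hlow (k : ℤ) (hk : 1 ≤ orbit k) : 1 ≤ digit i k :=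
    (Int.le_floor.2 (by exact_mod_cast hk)).trans (floor_orbit_le_digit i k)
  by_cases h : orbit j ≤ 1
  · have : orbit (j + 1) = 2 * orbit j := by rw [orbit_add_one, step_of_le_one h]
    linarith [digit_nonneg i j, hlow (j + 1) (by linarith [(orbit_mem j).1])]
  · linarith [hlow j (by linarith), digit_nonneg i (j + 1)]

theorem carry_mem (i j : ℤ) : carry i j ∈ Set.Ioo (-6) 3 := by
  have h := mul_floor_sub_mul_floor_mem_Ioo (mult_pos (tag (orbit j))) (by norm_num : (0 : ℤ) < 3)
    (u := (i : ℚ) * orbit j) (v := (i : ℚ) * orbit (j + 1))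
    (by push_cast; linear_combination (i : ℚ) * mult_mul_orbit j)
  obtain ⟨hlo, hhi⟩ := h
  have := (le_abs_self _).trans (abs_mult_le (tag (orbit j)))
  exact ⟨by rw [carry]; linarith, hhi⟩

theorem three_mul_digit_add_one (i j : ℤ) :
    3 * digit i (j + 1) = mult (tag (orbit j)) * digit i j + carry i j - carry (i + 1) j := by
  simp only [digit, carry]
  push_cast
  ring

structure Label where
  tag : Bool
  south : Fin 3
  north : Fin 3
  west : Fin 8
  east : Fin 8
deriving DecidableEq, Fintype, Encodable

/-- Carries lie in `[-5, 2]` and are stored in `Fin 8` with an offset of `5`. -/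
def carryOfFin (c : Fin 8) : ℤ := c - 5

theorem abs_carryOfFin_sub_le (c d : Fin 8) : |carryOfFin c - carryOfFin d| ≤ 7 := by
  simp only [carryOfFin, abs_le]; omega

def finOfCarry (c : ℤ) (h : c ∈ Set.Ioo (-6) 3) : Fin 8 := ⟨(c + 5).toNat, by grind⟩

theorem carryOfFin_finOfCarry (c : ℤ) (h : c ∈ Set.Ioo (-6) 3) :
    carryOfFin (finOfCarry c h) = c := by
  simp only [carryOfFin, finOfCarry]; grind

def finOfDigit (d : ℤ) (h₀ : 0 ≤ d) (h₂ : d ≤ 2) : Fin 3 := ⟨d.toNat, by omega⟩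

theorem coe_finOfDigit (d : ℤ) (h₀ : 0 ≤ d) (h₂ : d ≤ 2) :
    ((finOfDigit d h₀ h₂ : ℕ) : ℤ) = d :=
  Int.toNat_of_nonneg h₀

def Label.Valid (t : Label) : Prop :=
  3 * (t.north : ℤ) = mult t.tag * t.south + carryOfFin t.west - carryOfFin t.east ∧
    1 ≤ (t.south : ℤ) + t.north

instance : DecidablePred Label.Valid := fun _ => inferInstanceAs (Decidable (_ ∧ _))

def tiles : WangTileSet where
  Tile := {t : Label // t.Valid}
  Color := Fin 3 ⊕ Bool × Fin 8
  fintypeTile := inferInstance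
  decEqTile := inferInstance
  encodableTile := inferInstance
  fintypeColor := inferInstance
  north t := .inl t.1.north
  south t := .inl t.1.south
  -- The tag is part of the horizontal colours, so it is constant along each row.
  east t := .inr (t.1.tag, t.1.east)
  west t := .inr (t.1.tag, t.1.west)

def canonicalLabel (i j : ℤ) : Label where
  tag := tag (orbit j)
  south := finOfDigit (digit i j) (digit_nonneg i j) (digit_le_two i j)
  north := finOfDigit (digit i (j + 1)) (digit_nonneg i (j + 1)) (digit_le_two i (j + 1))
  west := finOfCarry (carry i j) (carry_mem i j)
  east := finOfCarry (carry (i + 1) j) (carry_mem (i + 1) j)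

theorem canonicalLabel_valid (i j : ℤ) : (canonicalLabel i j).Valid := by
  simp only [Label.Valid, canonicalLabel, coe_finOfDigit, carryOfFin_finOfCarry]
  exact ⟨three_mul_digit_add_one i j, one_le_digit_add_digit i j⟩

def canonicalTiling (p : ℤ × ℤ) : tiles.Tile := ⟨canonicalLabel p.1 p.2, canonicalLabel_valid _ _⟩

theorem isTiling_canonicalTiling : tiles.IsTiling canonicalTiling := fun _ _ => ⟨rfl, rfl⟩

def rowSum (f : ℤ × ℤ → tiles.Tile) (j c : ℤ) (N : ℕ) : ℤ :=
  ∑ k ∈ range N, ((f (c + k, j)).1.south : ℤ)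

def rowMult (f : ℤ × ℤ → tiles.Tile) (j : ℤ) : ℤ := mult (f (0, j)).1.tag

variable {f : ℤ × ℤ → tiles.Tile}

theorem rowSum_nonneg (j c : ℤ) (N : ℕ) : 0 ≤ rowSum f j c N :=
  sum_nonneg fun _ _ => Int.natCast_nonneg _

theorem rowSum_le (j c : ℤ) (N : ℕ) : rowSum f j c N ≤ 2 * N := by
  calc rowSum f j c N ≤ ∑ _k ∈ range N, (2 : ℤ) :=
        sum_le_sum fun k _ => by have := (f (c + k, j)).1.south.is_lt; omega
    _ = 2 * N := by simp [mul_comm]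

theorem abs_rowSum_sub_rowSum_le (j c d : ℤ) (N : ℕ) :
    |rowSum f j c N - rowSum f j d N| ≤ 2 * |c - d| :=
  abs_sum_range_sub_sum_range_le (g := fun i => ((f (i, j)).1.south : ℤ))
    (fun i => ⟨Int.natCast_nonneg _, by have := (f (i, j)).1.south.is_lt; omega⟩) c d N

section Tiling

variable (hf : tiles.IsTiling f)
include hf

theorem tag_add_one (i j : ℤ) : (f (i + 1, j)).1.tag = (f (i, j)).1.tag :=
  (Prod.ext_iff.1 (Sum.inr_injective (hf i j).1)).1.symm

theorem west_add_one (i j : ℤ) : (f (i + 1, j)).1.west = (f (i, j)).1.east :=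
  (Prod.ext_iff.1 (Sum.inr_injective (hf i j).1)).2.symm

theorem south_add_one (i j : ℤ) : (f (i, j + 1)).1.south = (f (i, j)).1.north :=
  (Sum.inl_injective (hf i j).2).symm

theorem tag_eq_tag_zero (i j : ℤ) : (f (i, j)).1.tag = (f (0, j)).1.tag := by
  induction i using Int.induction_on with
  | zero => rfl
  | succ i ih => rw [tag_add_one hf, ih]
  | pred i ih => rw [← ih, ← tag_add_one hf, sub_add_cancel]

theorem three_mul_rowSum_add_one (j c : ℤ) (N : ℕ) :
    3 * rowSum f (j + 1) c N = rowMult f j * rowSum f j c N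
      + carryOfFin (f (c, j)).1.west - carryOfFin (f (c + N, j)).1.west := by
  induction N with
  | zero => simp [rowSum]
  | succ N ih =>
    have hvalid := (f (c + N, j)).2.1
    rw [tag_eq_tag_zero hf, ← south_add_one hf, ← west_add_one hf] at hvalid
    simp only [rowSum, rowMult, sum_range_succ] at ih ⊢
    push_cast
    rw [← add_assoc]
    linear_combination ih + hvalid

theorem le_rowSum_add_rowSum (j c : ℤ) (N : ℕ) :
    (N : ℤ) ≤ rowSum f j c N + rowSum f (j + 1) c N := by
  calc (N : ℤ) = ∑ _k ∈ range N, (1 : ℤ) := by simp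
    _ ≤ rowSum f j c N + rowSum f (j + 1) c N := by
      rw [rowSum, rowSum, ← sum_add_distrib]
      exact sum_le_sum fun k _ => south_add_one hf (c + k) j ▸ (f (c + k, j)).2.2

theorem not_periodic_horizontal {a : ℕ} (ha : 0 < a) : ¬ Periodic f ((a : ℤ), 0) := by
  intro hper
  set u : ℕ → ℤ := fun k => rowSum f k 0 a with hu
  have hrec (k : ℕ) : 3 * u (k + 1) = rowMult f k * u k := by
    have h := three_mul_rowSum_add_one hf k 0 a
    have hshift : f (0 + a, k) = f (0, k) := by simpa using hper (0, k)
    rw [hshift, add_sub_cancel_right] at h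
    simpa [hu] using h
  have hdvd := pow_dvd_of_mul_succ_eq (q := 2) (by norm_num [Int.isCoprime_iff_gcd_eq_one])
    (fun k => two_dvd_mult _) hrec
  have hne (k : ℕ) : u k ≠ 0 := by
    intro hk
    have h := hrec k
    rw [hk, mul_zero] at h
    have := le_rowSum_add_rowSum hf k 0 a
    simp only [hu, Nat.cast_add, Nat.cast_one] at hk h
    omega
  have hpos : 0 < u (2 * a) := (rowSum_nonneg _ _ _).lt_of_ne (hne _).symm
  have hlarge := Int.le_of_dvd hpos (hdvd (2 * a))
  have hsmall : u (2 * a) ≤ 2 * a := rowSum_le _ _ _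
  have hpow : ((2 * a : ℕ) : ℤ) < 2 ^ (2 * a) := by exact_mod_cast Nat.lt_two_pow_self
  push_cast at hpow
  omega

theorem rowSum_le_of_periodic (a : ℤ) {b : ℕ} (hb : 0 < b) (hper : Periodic f (a, b))
    (j : ℤ) (N : ℕ) : rowSum f j 0 N ≤ 7 * 10 ^ b + 3 ^ b * (2 * |a|) := by
  set P := ∏ t ∈ range b, rowMult f (j + t)
  have hrec := abs_pow_mul_sub_prod_mul_le (p := 3) (M := 6) (D := 7)
    (u := fun k : ℕ => rowSum f (j + k) 0 N) (m := fun k => rowMult f (j + k))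
    (d := fun k => carryOfFin (f (0, j + k)).1.west - carryOfFin (f (N, j + k)).1.west)
    (fun _ => abs_mult_le _) (fun _ => abs_carryOfFin_sub_le _ _)
    (fun k => by
      have h := three_mul_rowSum_add_one hf (j + k) 0 N
      rw [zero_add] at h
      push_cast
      rw [← add_assoc]
      linear_combination h) b
  rw [show (6 : ℤ) + |3| + 1 = 10 by norm_num, Nat.cast_zero, add_zero] at hrec
  have hshift : rowSum f (j + b) 0 N = rowSum f j (-a) N := by
    refine sum_congr rfl fun k _ => ?_
    have := hper (-a + k, j)
    simp only [Prod.mk_add_mk, neg_add_cancel_comm, zero_add] at this ⊢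
    rw [this]
  have hclose := abs_rowSum_sub_rowSum_le (f := f) j (-a) 0 N
  have hne : P ≠ 3 ^ b := prod_range_ne_three_pow (fun _ => two_dvd_mult _) hb
  have hP : 1 ≤ |3 ^ b - P| := Int.one_le_abs (sub_ne_zero.2 hne.symm)
  have hS := rowSum_nonneg (f := f) j 0 N
  calc rowSum f j 0 N ≤ |3 ^ b - P| * rowSum f j 0 N := le_mul_of_one_le_left hS hP
    _ = |(3 ^ b - P) * rowSum f j 0 N| := by rw [abs_mul, abs_of_nonneg hS]
    _ = |(3 ^ b * rowSum f (j + b) 0 N - P * rowSum f j 0 N)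
          - 3 ^ b * (rowSum f j (-a) N - rowSum f j 0 N)| := by rw [hshift]; congr 1; ring
    _ ≤ |3 ^ b * rowSum f (j + b) 0 N - P * rowSum f j 0 N|
          + |3 ^ b * (rowSum f j (-a) N - rowSum f j 0 N)| := abs_sub _ _
    _ ≤ 7 * 10 ^ b + 3 ^ b * (2 * |a|) := by
      rw [abs_mul, abs_pow, abs_of_pos (by norm_num : (0 : ℤ) < 3)]
      exact add_le_add hrec (by gcongr; simpa using hclose)

theorem not_periodic_vertical (a : ℤ) {b : ℕ} (hb : 0 < b) : ¬ Periodic f (a, b) := by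
  intro hper
  set C := 7 * 10 ^ b + 3 ^ b * (2 * |a|)
  have hC : 0 ≤ C := by positivity
  have hgrow := le_rowSum_add_rowSum hf 0 0 (2 * C + 1).toNat
  have h₀ := rowSum_le_of_periodic hf a hb hper 0 (2 * C + 1).toNat
  have h₁ := rowSum_le_of_periodic hf a hb hper 1 (2 * C + 1).toNat
  rw [zero_add] at hgrow
  omega

theorem not_periodic {v : ℤ × ℤ} (hv : v ≠ 0) : ¬ Periodic f v := by
  intro hper
  wlog hb : 0 ≤ v.2 generalizing v
  · exact this (neg_ne_zero.2 hv) hper.neg (by simp only [Prod.snd_neg]; omega)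
  obtain ⟨a, b⟩ := v
  lift b to ℕ using hb
  rcases Nat.eq_zero_or_pos b with rfl | hb
  · have ha : a ≠ 0 := fun ha => hv (by simp [ha])
    refine not_periodic_horizontal hf (Int.natAbs_pos.2 ha) ?_
    rw [Nat.cast_zero] at hper
    rcases Int.natAbs_eq a with h | h
    · rwa [← h]
    · rw [show ((a.natAbs : ℤ), (0 : ℤ)) = -(a, 0) from
        Prod.ext (by rw [Prod.fst_neg]; omega) neg_zero.symm]
      exact hper.neg
  · exact not_periodic_vertical hf a hb hper

end Tiling

end Kari

/-- There is an aperiodic Wang tile set: it admits tilings of the plane, but no tiling is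
invariant under a nonzero translation. -/
theorem exists_aperiodic_palette :
    ∃ W : WangTileSet,
      (∃ f : ℤ × ℤ → W.Tile, W.IsTiling f) ∧
      ∀ f : ℤ × ℤ → W.Tile, W.IsTiling f →
        ∀ v : ℤ × ℤ, v ≠ 0 → ∃ x : ℤ × ℤ, f (x + v) ≠ f x := by
  refine ⟨Kari.tiles, ⟨_, Kari.isTiling_canonicalTiling⟩, fun f hf v hv => ?_⟩
  by_contra! hper
  exact Kari.not_periodic hf hv hper
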